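/- Let A = ℂ[[x,z]]/(z^2), β ∈ ℂ[[x]] of the form β = x^m·α with α a unit and m ≥ 0, and consider the extension of A-modules 0 → B → E → B → 0 (B = A/(z)) corresponding to β under the identification Ext^1_A(B, B) ≅ B. Then E ≅ I_m = (x^m, z) ⊂ A. In particular the extension corresponding to a unit gives E ≅ A. -/

import Mathlib

/-!
STATEMENT 11: over `A = ℂ[[x,z]]/(z²)`, `B = A/(z)`: the extension of `A`-modules
`0 → B → E → B → 0` whose class corresponds to `β = xᵐ·α` (`α` a unit) under
`Ext¹_A(B,B) ≅ B` satisfies `E ≅ I_m = (xᵐ, z)`; in particular for a unit class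
(`m = 0`) one gets `E ≅ A`.  The class of the extension is encoded concretely: for any
`e ∈ E` lifting `1 ∈ B` one has `z·e = f(β)` (this identifies the class under the
isomorphism coming from the 2-periodic resolution `… → A →z A → B → 0`).
-/

open Polynomial

noncomputable section

/-- `R = ℂ[[x]]`. -/
abbrev Rx : Type := PowerSeries ℂ

/-- `A = ℂ[[x]][z]/(z²)`, the local ring `𝒪_{2,P}` of a primitive double curve. -/
abbrev A2 : Type := Rx[X] ⧸ Ideal.span {(X : Rx[X]) ^ 2}

/-- the class `z` in `A`. -/
def zq : A2 := Ideal.Quotient.mk _ (X : Rx[X])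

/-- the element `x` in `A`. -/
def xq : A2 := Ideal.Quotient.mk _ (C PowerSeries.X : Rx[X])

instance instIsTwoSidedA2 (I : Ideal A2) : I.IsTwoSided :=
  Ideal.instIsTwoSided_1 (α := A2) I

/-- `B = A/(z) ≅ ℂ[[x]]`. -/
abbrev Bq : Type := A2 ⧸ Ideal.span {zq}

/-- the ideal `I_k = (x^k, z) ⊂ A`. -/
def Iq (k : ℕ) : Ideal A2 := Ideal.span {xq ^ k, zq}

/-- a module is torsion free if no nonzero element is annihilated by a power of `x`. -/
def IsTorsionFree (M : Type) [AddCommGroup M] [Module A2 M] : Prop :=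
  ∀ (m : M) (k : ℕ), xq ^ k • m = 0 → m = 0

/-- the class of `x` in `B = A/(z)`. -/
def xB : Bq := Ideal.Quotient.mk _ xq

/-!
The generators `e` (a lift of `1 ∈ B`) and `f 1` of `E` satisfy exactly the relations
`z • e = xᵐ • f 1` and `z • f 1 = 0` once the unit `α` is absorbed into `f`. The generators
`xᵐ, z` of `I_m` satisfy the same relations, and no others because the annihilator of `z` is
`(z)` and `x` is a nonzerodivisor on `A/(z)`. So both modules are the same quotient of `A²`.
-/

open Function

section Presentation

variable {R : Type*} [CommRing R] (y z : R)

/-- `R × R` modulo these relations is the module generated by `e₁, e₂` subject to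
`z • e₁ = y • e₂` and `z • e₂ = 0`. -/
def extRelations : Submodule R (R × R) := Submodule.span R {(z, -y), (0, z)}

variable {y z}

theorem mem_extRelations (d d' : R) : (z * d, z * d' - y * d) ∈ extRelations y z :=
  Submodule.mem_span_pair.2 ⟨d, d', by ext <;> simp <;> ring⟩

variable {E : Type*} [AddCommGroup E] [Module R E]
  {f : R ⧸ Ideal.span {z} →ₗ[R] E} {g : E →ₗ[R] R ⧸ Ideal.span {z}} {e : E}

theorem ker_coprod_eq_extRelations (hf : Injective f) (hfg : Exact f g) (he : g e = 1)
    (hze : z • e = f (Ideal.Quotient.mk _ y)) :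
    LinearMap.ker ((LinearMap.toSpanSingleton R E e).coprod (f ∘ₗ (Ideal.span {z}).mkQ)) =
      extRelations y z := by
  refine le_antisymm ?_ (Submodule.span_le.2 ?_)
  · rintro ⟨a, c⟩ h
    replace h : a • e + f (Ideal.Quotient.mk _ c) = 0 := h
    obtain ⟨d, rfl⟩ : z ∣ a := by
      have := congrArg g h
      rw [map_add, map_smul, he, hfg.apply_apply_eq_zero, add_zero, map_zero,
        Algebra.smul_def, mul_one] at this
      exact Ideal.mem_span_singleton.1 (Ideal.Quotient.eq_zero_iff_mem.1 this)
    obtain ⟨d', hd'⟩ : z ∣ d * y + c := by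
      rw [mul_comm, mul_smul, hze, ← map_smul, ← map_add, map_eq_zero_iff f hf,
        Algebra.smul_def, Ideal.Quotient.algebraMap_eq, ← map_mul, ← map_add] at h
      exact Ideal.mem_span_singleton.1 (Ideal.Quotient.eq_zero_iff_mem.1 h)
    convert mem_extRelations (y := y) d d' using 2
    linear_combination hd'
  · rintro _ (rfl | rfl)
    · simp [hze]
    · simp [Ideal.Quotient.eq_zero_iff_mem.2 (Ideal.mem_span_singleton_self z)]

theorem coprod_toSpanSingleton_surjective_of_exact (hfg : Exact f g) (he : g e = 1) :
    Surjective ((LinearMap.toSpanSingleton R E e).coprod (f ∘ₗ (Ideal.span {z}).mkQ)) := by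
  intro w
  obtain ⟨a, ha⟩ := Ideal.Quotient.mk_surjective (g w)
  obtain ⟨b, hb⟩ : ∃ b, f b = w - a • e := (hfg _).1 (by
    rw [map_sub, map_smul, he, Algebra.smul_def, mul_one, Ideal.Quotient.algebraMap_eq, ha,
      sub_self])
  obtain ⟨c, rfl⟩ := Ideal.Quotient.mk_surjective b
  exact ⟨(a, c), by simp [hb]⟩

theorem ker_coprod_toSpanSingleton_eq_extRelations (hzz : z * z = 0)
    (hann : ∀ w, w * z = 0 → z ∣ w) (hreg : ∀ a, z ∣ a * y → z ∣ a) :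
    LinearMap.ker ((LinearMap.toSpanSingleton R R y).coprod (LinearMap.toSpanSingleton R R z)) =
      extRelations y z := by
  refine le_antisymm ?_ (Submodule.span_le.2 ?_)
  · rintro ⟨a, c⟩ h
    replace h : a * y + c * z = 0 := h
    obtain ⟨d, rfl⟩ := hreg a ⟨-c, by linear_combination h⟩
    obtain ⟨d', hd'⟩ := hann (d * y + c) (by linear_combination h)
    convert mem_extRelations (y := y) d d' using 2
    linear_combination hd'
  · rintro _ (rfl | rfl)
    · simp [mul_comm]
    · simp [hzz]

theorem range_coprod_toSpanSingleton :
    LinearMap.range ((LinearMap.toSpanSingleton R R y).coprod (LinearMap.toSpanSingleton R R z)) =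
      Ideal.span {y, z} := by
  rw [LinearMap.range_coprod, ← LinearMap.span_singleton_eq_range,
    ← LinearMap.span_singleton_eq_range, Ideal.span, Submodule.span_insert]

theorem nonempty_linearEquiv_span_pair_of_smul_eq (hzz : z * z = 0)
    (hann : ∀ w, w * z = 0 → z ∣ w) (hreg : ∀ a, z ∣ a * y → z ∣ a)
    (hf : Injective f) (hfg : Exact f g) (he : g e = 1)
    (hze : z • e = f (Ideal.Quotient.mk _ y)) :
    Nonempty (E ≃ₗ[R] Ideal.span {y, z}) :=
  ⟨(LinearMap.quotKerEquivOfSurjective _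
      (coprod_toSpanSingleton_surjective_of_exact hfg he)).symm ≪≫ₗ
    Submodule.quotEquivOfEq _ _ ((ker_coprod_eq_extRelations hf hfg he hze).trans
      (ker_coprod_toSpanSingleton_eq_extRelations hzz hann hreg).symm) ≪≫ₗ
    LinearMap.quotKerEquivRange _ ≪≫ₗ LinearEquiv.ofEq _ _ range_coprod_toSpanSingleton⟩

theorem nonempty_linearEquiv_span_pair (hzz : z * z = 0)
    (hann : ∀ w, w * z = 0 → z ∣ w) (hreg : ∀ a, z ∣ a * y → z ∣ a)
    (hf : Injective f) (hfg : Exact f g) (he : g e = 1) (u : (R ⧸ Ideal.span {z})ˣ)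
    (hze : z • e = f (Ideal.Quotient.mk (Ideal.span {z}) y * u)) :
    Nonempty (E ≃ₗ[R] Ideal.span {y, z}) := by
  let μ := DistribMulAction.toLinearEquiv R (R ⧸ Ideal.span {z}) u
  refine nonempty_linearEquiv_span_pair_of_smul_eq (f := f ∘ₗ μ.toLinearMap) hzz hann hreg
    (hf.comp μ.injective) (LinearEquiv.precomp_exact_iff_exact.2 hfg) he ?_
  rw [hze, mul_comm]
  rfl

end Presentation

theorem zq_mul_self : zq * zq = 0 := by
  rw [zq, ← map_mul, ← sq, Ideal.Quotient.eq_zero_iff_mem]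
  exact Ideal.mem_span_singleton_self _

theorem zq_dvd_mk_iff (v : Rx[X]) : zq ∣ Ideal.Quotient.mk _ v ↔ X ∣ v := by
  constructor
  · rintro ⟨c, hc⟩
    obtain ⟨w, rfl⟩ := Ideal.Quotient.mk_surjective c
    rw [zq, ← map_mul, Ideal.Quotient.eq, Ideal.mem_span_singleton] at hc
    simpa using dvd_add ((dvd_pow_self X two_ne_zero).trans hc) (dvd_mul_right X w)
  · rintro ⟨c, rfl⟩
    exact ⟨Ideal.Quotient.mk _ c, map_mul _ _ _⟩

theorem zq_dvd_of_mul_zq_eq_zero (w : A2) (h : w * zq = 0) : zq ∣ w := by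
  obtain ⟨v, rfl⟩ := Ideal.Quotient.mk_surjective w
  rw [zq, ← map_mul, Ideal.Quotient.eq_zero_iff_mem, Ideal.mem_span_singleton, sq] at h
  exact (zq_dvd_mk_iff v).2 ((mul_dvd_mul_iff_right X_ne_zero).1 h)

theorem zq_dvd_of_dvd_mul_xq_pow (m : ℕ) (a : A2) (h : zq ∣ a * xq ^ m) : zq ∣ a := by
  obtain ⟨v, rfl⟩ := Ideal.Quotient.mk_surjective a
  rw [xq, ← map_pow, ← map_mul, zq_dvd_mk_iff] at h
  refine (zq_dvd_mk_iff v).2 ((prime_X.dvd_or_dvd h).resolve_right fun hX => ?_)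
  rw [X_dvd_iff, ← C_pow, coeff_C_zero] at hX
  exact pow_ne_zero m PowerSeries.X_ne_zero hX

theorem Iq_zero : Iq 0 = ⊤ :=
  (Ideal.eq_top_iff_one _).2 (Ideal.subset_span (by simp))

theorem stmt_11_general (m : ℕ) (α : Bqˣ) (β : Bq) (hβ : β = xB ^ m * α)
    (E : Type) [AddCommGroup E] [Module A2 E]
    (f : Bq →ₗ[A2] E) (g : E →ₗ[A2] Bq)
    (hf : Function.Injective f)
    (hfg : LinearMap.range f = LinearMap.ker g)
    (e : E) (he : g e = 1) (hze : zq • e = f β) :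
    Nonempty (E ≃ₗ[A2] ↥(Iq m)) ∧ (m = 0 → Nonempty (E ≃ₗ[A2] A2)) := by
  rw [hβ, xB, ← map_pow] at hze
  obtain ⟨φ⟩ := (nonempty_linearEquiv_span_pair (y := xq ^ m) (f := f) (g := g) (e := e))
    zq_mul_self zq_dvd_of_mul_zq_eq_zero
    (zq_dvd_of_dvd_mul_xq_pow m) hf (LinearMap.exact_iff.2 hfg.symm) he α hze
  refine ⟨⟨φ⟩, fun hm => ?_⟩
  subst hm
  exact ⟨φ ≪≫ₗ LinearEquiv.ofEq _ _ Iq_zero ≪≫ₗ Submodule.topEquiv⟩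

theorem stmt_11 (m : ℕ) (α : Bqˣ) (β : Bq) (hβ : β = xB ^ m * α)
    (E : Type) [AddCommGroup E] [Module A2 E]
    (f : Bq →ₗ[A2] E) (g : E →ₗ[A2] Bq)
    (hf : Function.Injective f) (hg : Function.Surjective g)
    (hfg : LinearMap.range f = LinearMap.ker g)
    (e : E) (he : g e = 1) (hze : zq • e = f β) :
    Nonempty (E ≃ₗ[A2] ↥(Iq m)) ∧ (m = 0 → Nonempty (E ≃ₗ[A2] A2)) :=
  stmt_11_general m α β hβ E f g hf hfg e he hze
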